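/- arXiv:1006.2602 — 6 statements merged into one kernel-verified Lean document; each statement's English description precedes it below -/
import Mathlib

section
/- For any ε > 0, any natural number N ≥ 1, and any real numbers α₁, ..., α_N, there exists a positive integer k such that ∑_{j=1}^N |e^{i α_j k} - 1| < ε. -/
/-!
The point `ξ = (α_j mod 2π)_j` of the compact torus `(ℝ/2πℤ)^N` has multiples `k • ξ`
with a Cauchy subsequence, so two of them, `k₁ < k₂`, are `δ`-close, and then `(k₂ - k₁) • ξ`
is `δ`-close to `0`. Since `|e^{iθ} - 1| ≤ |θ|` and `e^{iθ}` only depends on `θ mod 2π`, each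
term `|e^{i α_j k} - 1|` is at most the norm of `k • ξ` in the torus.
-/

open Complex Real

theorem exists_pos_norm_nsmul_lt {A : Type*} [SeminormedAddCommGroup A] [CompactSpace A]
    (x : A) {δ : ℝ} (hδ : 0 < δ) : ∃ k : ℕ, 0 < k ∧ ‖k • x‖ < δ := by
  obtain ⟨_, φ, hφ, hlim⟩ := CompactSpace.tendsto_subseq fun n : ℕ ↦ n • x
  obtain ⟨M, hM⟩ := Metric.cauchySeq_iff'.mp hlim.cauchySeq δ hδ
  have hlt : φ M < φ (M + 1) := hφ M.lt_succ_self
  refine ⟨φ (M + 1) - φ M, Nat.sub_pos_of_lt hlt, ?_⟩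
  rw [sub_nsmul x hlt.le, ← sub_eq_add_neg, ← dist_eq_norm]
  exact hM (M + 1) M.le_succ

theorem norm_exp_I_mul_sub_one_le_norm_addCircle (θ : ℝ) :
    ‖exp (I * θ) - 1‖ ≤ ‖(θ : AddCircle (2 * π))‖ := by
  set m := round ((2 * π)⁻¹ * θ)
  have hθ : exp (I * θ) = exp (I * ↑(θ - m * (2 * π))) := by
    rw [ofReal_sub, mul_sub, Complex.exp_sub]
    push_cast
    rw [show I * (m * (2 * π)) = m * (2 * π * I) by ring, exp_int_mul_two_pi_mul_I, div_one]
  rw [hθ, AddCircle.norm_eq, ← Real.norm_eq_abs]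
  exact norm_exp_I_mul_ofReal_sub_one_le

theorem exists_pos_sum_norm_exp_I_mul_sub_one_lt {ι : Type*} (s : Finset ι) (α : ι → ℝ)
    {ε : ℝ} (hε : 0 < ε) : ∃ k : ℕ, 0 < k ∧ ∑ j ∈ s, ‖exp (I * α j * k) - 1‖ < ε := by
  have : Fact (0 < 2 * π) := ⟨two_pi_pos⟩
  set δ := ε / (s.card + 1)
  obtain ⟨k, hk, hξ⟩ :=
    exists_pos_norm_nsmul_lt (fun j : s ↦ (α j : AddCircle (2 * π))) (δ := δ) (by positivity)
  refine ⟨k, hk, ?_⟩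
  have hterm : ∀ j ∈ s, ‖exp (I * α j * k) - 1‖ ≤ δ := by
    intro j hj
    calc ‖exp (I * α j * k) - 1‖ = ‖exp (I * ↑(k * α j)) - 1‖ := by push_cast; ring_nf
      _ ≤ ‖((k * α j : ℝ) : AddCircle (2 * π))‖ := norm_exp_I_mul_sub_one_le_norm_addCircle _
      _ = ‖(k • fun j : s ↦ (α j : AddCircle (2 * π))) ⟨j, hj⟩‖ := by
        rw [Pi.smul_apply, ← AddCircle.coe_nsmul, nsmul_eq_mul]
      _ ≤ δ := (norm_le_pi_norm _ _).trans hξ.le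
  calc ∑ j ∈ s, ‖exp (I * α j * k) - 1‖ ≤ s.card * δ := by
        simpa using Finset.sum_le_card_nsmul _ _ _ hterm
    _ < ε := by
        rw [mul_div_assoc', div_lt_iff₀ (by positivity)]
        nlinarith

theorem simultaneous_recurrence_general (ε : ℝ) (hε : 0 < ε) (N : ℕ) (α : ℕ → ℝ) :
    ∃ k : ℕ, 0 < k ∧
      ∑ j ∈ Finset.Icc 1 N, ‖Complex.exp (Complex.I * α j * k) - 1‖ < ε :=
  exists_pos_sum_norm_exp_I_mul_sub_one_lt _ α hε

/-- For any `ε > 0`, any `N ≥ 1`, and any real numbers `α 1, ..., α N`, there exists a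
positive integer `k` such that `∑_{j=1}^N |e^{i α_j k} - 1| < ε`. -/
theorem simultaneous_recurrence (ε : ℝ) (hε : 0 < ε) (N : ℕ) (hN : 1 ≤ N) (α : ℕ → ℝ) :
    ∃ k : ℕ, 0 < k ∧
      ∑ j ∈ Finset.Icc 1 N, ‖Complex.exp (Complex.I * α j * k) - 1‖ < ε :=
  simultaneous_recurrence_general ε hε N α
end

section
/- Let H be a complex Hilbert space with an orthonormal basis (e_j)_{j≥1}, let (λ_j)_{j≥1} be real numbers, and let z ∈ H satisfy ∑_j λ_j^3 |⟨z, e_j⟩|² < ∞. Then for every ε > 0 there exists a positive integer k such that ∑_j |e^{-i λ_j k} - 1|² · λ_j^3 · |⟨z, e_j⟩|² < ε, provided λ_j ≥ 0 for all j. -/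
/-!
The frequencies give a point `x = (e^{-iλ_j})_j` of the compact group `Circle^ℕ`, and in a
compact group `1` is a cluster point of the positive powers of any element. The weighted defect
`w ↦ ∑_j |w_j - 1|² λ_j³ |⟨z, e_j⟩|²` is continuous on `Circle^ℕ` for the product topology, its
terms being dominated by the summable `4 |λ_j³| |⟨z, e_j⟩|²`, and it vanishes at `w = 1`;
hence it is `< ε` at some `x^k` with `k > 0`.
-/

open Filter Topology

theorem exists_pos_pow_mem_of_mem_nhds_one {G : Type*} [Group G] [TopologicalSpace G]
    [CompactSpace G] [IsTopologicalGroup G] (x : G) {U : Set G} (hU : U ∈ 𝓝 1) :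
    ∃ k : ℕ, 0 < k ∧ x ^ k ∈ U :=
  (((mapClusterPt_one_atTop_pow x).frequently hU).and_eventually (eventually_gt_atTop 0)).exists.imp
    fun _ hk => hk.symm

theorem norm_coe_circle_sub_one_le_two (w : Circle) : ‖(w : ℂ) - 1‖ ≤ 2 := by
  calc ‖(w : ℂ) - 1‖ ≤ ‖(w : ℂ)‖ + ‖(1 : ℂ)‖ := norm_sub_le _ _
    _ = 2 := by rw [Circle.norm_coe, norm_one]; norm_num

theorem continuous_tsum_norm_coe_sub_one_sq_mul {ι : Type*} {g : ι → ℝ} (hg : Summable g) :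
    Continuous fun w : ι → Circle => ∑' j, ‖(w j : ℂ) - 1‖ ^ 2 * g j := by
  refine continuous_tsum (u := fun j => 4 * |g j|) (fun j => by fun_prop)
    (hg.abs.mul_left 4) fun j w => ?_
  have hsq : ‖(w j : ℂ) - 1‖ ^ 2 ≤ 4 := by
    nlinarith [norm_coe_circle_sub_one_le_two (w j), norm_nonneg ((w j : ℂ) - 1)]
  rw [norm_mul, norm_pow, norm_norm, Real.norm_eq_abs]
  exact mul_le_mul_of_nonneg_right hsq (abs_nonneg _)

theorem coe_pow_apply_circle_exp {ι : Type*} (lam : ι → ℝ) (k : ℕ) (j : ι) :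
    (((fun j => Circle.exp (-lam j)) ^ k) j : ℂ) = Complex.exp (-Complex.I * lam j * k) := by
  rw [Pi.pow_apply, ← Circle.exp_nsmul, Circle.coe_exp, nsmul_eq_mul]
  push_cast
  ring_nf

theorem free_evolution_returns_general {H : Type*} [NormedAddCommGroup H] [InnerProductSpace ℂ H]
    (e : HilbertBasis ℕ ℂ H) (lam : ℕ → ℝ) (z : H)
    (hsum : Summable fun j => lam j ^ 3 * ‖(inner ℂ z (e j) : ℂ)‖ ^ 2)
    (ε : ℝ) (hε : 0 < ε) :
    ∃ k : ℕ, 0 < k ∧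
      ∑' j, ‖Complex.exp (-Complex.I * lam j * k) - 1‖ ^ 2 * lam j ^ 3 *
        ‖(inner ℂ z (e j) : ℂ)‖ ^ 2 < ε := by
  set F : (ℕ → Circle) → ℝ := fun w => ∑' j, ‖(w j : ℂ) - 1‖ ^ 2 *
    (lam j ^ 3 * ‖(inner ℂ z (e j) : ℂ)‖ ^ 2)
  have hF : F ⁻¹' Set.Iio ε ∈ 𝓝 1 :=
    (continuous_tsum_norm_coe_sub_one_sq_mul hsum).continuousAt.preimage_mem_nhds
      (Iio_mem_nhds (by simpa [F] using hε))
  obtain ⟨k, hk, hreturn⟩ := exists_pos_pow_mem_of_mem_nhds_one (fun j => Circle.exp (-lam j)) hF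
  refine ⟨k, hk, ?_⟩
  simpa only [F, Set.mem_preimage, Set.mem_Iio, coe_pow_apply_circle_exp, mul_assoc] using hreturn

/-- Return of the free Schrödinger evolution along integer times, in the weighted norm
`‖z‖² = ∑_j λ_j^3 |⟨z, e_j⟩|²`. -/
theorem free_evolution_returns {H : Type*} [NormedAddCommGroup H] [InnerProductSpace ℂ H]
    (e : HilbertBasis ℕ ℂ H) (lam : ℕ → ℝ) (hlam : ∀ j, 0 ≤ lam j) (z : H)
    (hsum : Summable fun j => lam j ^ 3 * ‖(inner ℂ z (e j) : ℂ)‖ ^ 2)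
    (ε : ℝ) (hε : 0 < ε) :
    ∃ k : ℕ, 0 < k ∧
      ∑' j, ‖Complex.exp (-Complex.I * lam j * k) - 1‖ ^ 2 * lam j ^ 3 *
        ‖(inner ℂ z (e j) : ℂ)‖ ^ 2 < ε :=
  free_evolution_returns_general e lam z hsum ε hε
end

section
/- Let (ω_m)_{m≥1} be real numbers with ω_1 = 0, ω_i ≠ ω_j for i ≠ j, and ∑_{m≥2} 1/|ω_m|^p < ∞ for some p ≥ 1. Suppose a sequence (h_m)_{m≥2} of complex numbers with ∑_m |h_m|² < ∞ satisfies: the function s ↦ ∑_{m≥2} (e^{i ω_m s}/(-i ω_m)^p) h̄_m equals a polynomial of degree at most p−1 in s for all s ≥ 0. Then h_m = 0 for all m ≥ 2. -/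
open MeasureTheory Filter Topology
open scoped ENNReal NNReal

lemma norm_exp_I_mul_ofReal (a s : ℝ) : ‖Complex.exp (Complex.I * a * s)‖ = 1 := by
  rw [Complex.norm_exp]
  simp [Complex.mul_re]

lemma tendsto_div_nat_aux (f : ℕ → ℂ) (C : ℝ) (hf : ∀ n, ‖f n‖ ≤ C) :
    Tendsto (fun n : ℕ => (1 / (n : ℂ)) * f n) atTop (𝓝 0) := by
  rw [tendsto_zero_iff_norm_tendsto_zero]
  refine squeeze_zero (g := fun n : ℕ => (1 / (n:ℝ)) * C) (fun n => norm_nonneg _)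
    (fun n => ?_) ?_
  · rw [norm_mul, norm_div, norm_one, Complex.norm_natCast]
    have : (0:ℝ) ≤ 1 / (n:ℝ) := by positivity
    exact mul_le_mul_of_nonneg_left (hf n) this
  · have := tendsto_one_div_atTop_nhds_zero_nat.mul_const C
    simpa using this

-- closed form for the averaged exponential being small
lemma avg_exp_norm_le (β : ℝ) (hβ : β ≠ 0) (n : ℝ) :
    ‖(Complex.exp (Complex.I * β * n) - 1) / (Complex.I * β)‖ ≤ 2 / |β| := by
  rw [norm_div, norm_mul, Complex.norm_I, one_mul, Complex.norm_real, Real.norm_eq_abs]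
  have h1 : ‖Complex.exp (Complex.I * β * n) - 1‖ ≤ 2 := by
    calc ‖Complex.exp (Complex.I * β * n) - 1‖ ≤ ‖Complex.exp (Complex.I * β * n)‖ + ‖(1:ℂ)‖ :=
          norm_sub_le _ _
      _ = 2 := by rw [norm_exp_I_mul_ofReal, norm_one]; norm_num
  have h2 : (0:ℝ) < |β| := abs_pos.mpr hβ
  gcongr

lemma sq_summable_aux (p : ℕ) (ω : ℕ → ℝ) (hsum : Summable fun m : ℕ => 1 / |ω (m + 2)| ^ p) :
    Summable fun m : ℕ => (1 / |ω (m + 2)| ^ p) ^ 2 := by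
  have h0 := hsum.tendsto_atTop_zero
  have hev : ∀ᶠ m in atTop, ‖(1 / |ω (m + 2)| ^ p) ^ 2‖ ≤ 1 * ‖1 / |ω (m + 2)| ^ p‖ := by
    have h1 : ∀ᶠ m in atTop, 1 / |ω (m + 2)| ^ p ≤ 1 :=
      h0.eventually (eventually_le_nhds (by norm_num : (0:ℝ) < 1))
    filter_upwards [h1] with m hm
    have h2 : (0:ℝ) ≤ 1 / |ω (m + 2)| ^ p := by positivity
    rw [Real.norm_of_nonneg (by positivity), Real.norm_of_nonneg h2, one_mul, sq]
    nlinarith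
  exact summable_of_isBigO_nat hsum (Asymptotics.IsBigO.of_bound 1 hev)

/-- If `ω 1 = 0`, the `ω m` are pairwise distinct, `∑_{m≥2} 1/|ω m|^p < ∞` for some `p ≥ 1`,
`(h m) ∈ ℓ²`, and `s ↦ ∑_{m≥2} e^{i ω_m s}/(-i ω_m)^p ⋅ conj (h m)` coincides on `ℝ₊` with a
polynomial of degree at most `p - 1`, then `h m = 0` for all `m ≥ 2`. -/
theorem exp_sum_poly_coeffs_vanish (p : ℕ) (hp : 1 ≤ p) (ω : ℕ → ℝ) (hω1 : ω 1 = 0)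
    (hinj : ∀ i j, 1 ≤ i → 1 ≤ j → i ≠ j → ω i ≠ ω j)
    (hsum : Summable fun m : ℕ => 1 / |ω (m + 2)| ^ p)
    (h : ℕ → ℂ) (hl2 : Summable fun m => ‖h m‖ ^ 2)
    (P : Polynomial ℂ) (hdeg : P.natDegree ≤ p - 1)
    (heq : ∀ s : ℝ, 0 ≤ s →
      ∑' m : ℕ, Complex.exp (Complex.I * ω (m + 2) * s) / (-Complex.I * (ω (m + 2) : ℂ)) ^ p *
        (starRingEnd ℂ) (h (m + 2)) = P.eval (s : ℂ)) :
    ∀ m, 2 ≤ m → h m = 0 := by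
  -- the coefficients
  set c : ℕ → ℂ := fun m => (starRingEnd ℂ) (h (m + 2)) / (-Complex.I * (ω (m + 2) : ℂ)) ^ p
    with hc_def
  -- frequencies are nonzero
  have hω0 : ∀ m : ℕ, ω (m + 2) ≠ 0 := by
    intro m
    have := hinj (m + 2) 1 (by omega) (by omega) (by omega)
    rwa [hω1] at this
  have hden : ∀ m : ℕ, (-Complex.I * (ω (m + 2) : ℂ)) ^ p ≠ 0 := fun m =>
    pow_ne_zero _ (mul_ne_zero (neg_ne_zero.mpr Complex.I_ne_zero)
      (Complex.ofReal_ne_zero.mpr (hω0 m)))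
  -- norm of the coefficients
  have hnormc : ∀ m : ℕ, ‖c m‖ = ‖h (m + 2)‖ * (1 / |ω (m + 2)| ^ p) := by
    intro m
    rw [hc_def]
    simp only [norm_div, norm_pow, norm_mul, norm_neg, Complex.norm_I, one_mul,
      Complex.norm_real, RCLike.norm_conj, Real.norm_eq_abs]
    ring
  -- summability of the coefficient norms
  have hcs : Summable fun m => ‖c m‖ := by
    have hl2' : Summable fun m : ℕ => ‖h (m + 2)‖ ^ 2 := by
      have := (summable_nat_add_iff 2).mpr hl2
      exact this
    have hsq := sq_summable_aux p ω hsum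
    refine Summable.of_nonneg_of_le (fun m => norm_nonneg _) (fun m => ?_)
      (((hl2'.add hsq).div_const 2))
    rw [hnormc m]
    set a := ‖h (m + 2)‖
    set b := 1 / |ω (m + 2)| ^ p
    have ha : 0 ≤ a := norm_nonneg _
    have hb : (0:ℝ) ≤ b := by positivity
    nlinarith [sq_nonneg (a - b)]
  -- restated hypothesis
  have hceq : ∀ s : ℝ, 0 ≤ s →
      ∑' m : ℕ, c m * Complex.exp (Complex.I * ω (m + 2) * s) = P.eval (s : ℂ) := by
    intro s hs
    rw [← heq s hs]
    exact tsum_congr fun m => by rw [hc_def]; ring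
  -- summability of the terms, for each s
  have hterms : ∀ s : ℝ, Summable fun m => ‖c m * Complex.exp (Complex.I * ω (m + 2) * s)‖ := by
    intro s
    refine hcs.congr fun m => ?_
    rw [norm_mul, norm_exp_I_mul_ofReal, mul_one]
  -- P is bounded on ℝ₊, hence constant
  have hPbound : ∀ s : ℝ, 0 ≤ s → ‖P.eval (s : ℂ)‖ ≤ ∑' m, ‖c m‖ := by
    intro s hs
    rw [← hceq s hs]
    calc ‖∑' m, c m * Complex.exp (Complex.I * ω (m + 2) * s)‖
        ≤ ∑' m, ‖c m * Complex.exp (Complex.I * ω (m + 2) * s)‖ :=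
          norm_tsum_le_tsum_norm (hterms s)
      _ = ∑' m, ‖c m‖ := tsum_congr fun m => by
          rw [norm_mul, norm_exp_I_mul_ofReal, mul_one]
  have hPdeg : P.degree ≤ 0 := by
    by_contra hd
    push_neg at hd
    have htend : Tendsto (fun s : ℝ => ‖P.eval ((s : ℂ))‖) atTop atTop :=
      P.tendsto_norm_atTop hd (by
        simpa [Complex.norm_real] using tendsto_abs_atTop_atTop)
    obtain ⟨s, hs1, hs2⟩ := ((htend.eventually_gt_atTop (∑' m, ‖c m‖)).and
      (eventually_ge_atTop (0:ℝ))).exists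
    exact absurd (hPbound s hs2) (not_le.mpr hs1)
  obtain ⟨a, rfl⟩ : ∃ a, P = Polynomial.C a := ⟨P.coeff 0, Polynomial.eq_C_of_degree_le_zero hPdeg⟩
  -- Now the averaging argument
  intro m₀ hm₀
  obtain ⟨k, rfl⟩ : ∃ k, m₀ = k + 2 := ⟨m₀ - 2, by omega⟩
  set μ : ℝ := ω (k + 2) with hμ_def
  have hμ0 : μ ≠ 0 := hω0 k
  set α : ℕ → ℝ := fun m => ω (m + 2) - μ with hα_def
  have hαne : ∀ m, m ≠ k → α m ≠ 0 := by
    intro m hmk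
    have := hinj (m + 2) (k + 2) (by omega) (by omega) (by omega)
    simpa [hα_def, sub_eq_zero] using this
  set F : ℕ → ℕ → ℂ := fun n m =>
    c m * ((1 / (n : ℂ)) * ∫ s in (0:ℝ)..(n : ℝ), Complex.exp (Complex.I * α m * s)) with hF_def
  -- uniform bound
  have hbound : ∀ᶠ n : ℕ in atTop, ∀ m, ‖F n m‖ ≤ ‖c m‖ := by
    filter_upwards [eventually_ge_atTop 1] with n hn m
    have hn0 : (0:ℝ) < n := by exact_mod_cast hn
    have hInt : ‖∫ s in (0:ℝ)..(n : ℝ), Complex.exp (Complex.I * α m * s)‖ ≤ 1 * |(n:ℝ) - 0| :=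
      intervalIntegral.norm_integral_le_of_norm_le_const fun s _ =>
        le_of_eq (norm_exp_I_mul_ofReal _ _)
    rw [one_mul, sub_zero, abs_of_pos hn0] at hInt
    have h1 : ‖(1 / (n : ℂ)) * ∫ s in (0:ℝ)..(n : ℝ), Complex.exp (Complex.I * α m * s)‖ ≤ 1 := by
      rw [norm_mul, norm_div, norm_one, Complex.norm_natCast]
      rw [div_mul_eq_mul_div, one_mul, div_le_one hn0]
      exact hInt
    calc ‖F n m‖ = ‖c m‖ * ‖(1 / (n : ℂ)) * ∫ s in (0:ℝ)..(n : ℝ),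
          Complex.exp (Complex.I * α m * s)‖ := by rw [hF_def]; exact norm_mul _ _
      _ ≤ ‖c m‖ * 1 := by gcongr
      _ = ‖c m‖ := mul_one _
  -- pointwise limits
  have hlim : ∀ m, Tendsto (fun n => F n m) atTop (𝓝 (if m = k then c k else 0)) := by
    intro m
    by_cases hmk : m = k
    · subst hmk
      rw [if_pos rfl]
      have hα0 : α m = 0 := by simp [hα_def, hμ_def]
      have hev : ∀ᶠ n : ℕ in atTop, F n m = c m := by
        filter_upwards [eventually_ge_atTop 1] with n hn
        have hn0 : ((n : ℂ)) ≠ 0 := Nat.cast_ne_zero.mpr (by omega)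
        rw [hF_def]
        simp only [hα0, Complex.ofReal_zero, mul_zero, zero_mul, Complex.exp_zero]
        rw [intervalIntegral.integral_const]
        simp only [sub_zero, smul_eq_mul, mul_one, Complex.real_smul, Complex.ofReal_natCast]
        field_simp
      exact tendsto_const_nhds.congr' (Filter.EventuallyEq.symm hev)
    · rw [if_neg hmk]
      have hα : α m ≠ 0 := hαne m hmk
      have hIα : Complex.I * (α m : ℂ) ≠ 0 :=
        mul_ne_zero Complex.I_ne_zero (Complex.ofReal_ne_zero.mpr hα)
      have hFeq : ∀ n : ℕ, F n m = (1 / (n:ℂ)) *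
          (c m * ((Complex.exp (Complex.I * α m * ((n:ℝ):ℂ)) - 1) / (Complex.I * α m))) := by
        intro n
        rw [hF_def]
        beta_reduce
        rw [integral_exp_mul_complex hIα]
        rw [Complex.ofReal_zero, mul_zero, Complex.exp_zero]
        ring
      rw [show (fun n => F n m) = _ from funext hFeq]
      refine tendsto_div_nat_aux _ (‖c m‖ * (2 / |α m|)) fun n => ?_
      rw [norm_mul]
      exact mul_le_mul_of_nonneg_left (avg_exp_norm_le (α m) hα n) (norm_nonneg _)
  -- dominated convergence for the series
  have hG1 : Tendsto (fun n => ∑' m, F n m) atTop (𝓝 (c k)) := by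
    have := tendsto_tsum_of_dominated_convergence hcs hlim hbound
    rwa [tsum_ite_eq] at this
  -- identification of the average with the polynomial side
  have hswap : ∀ n : ℕ, 1 ≤ n → ∑' m, F n m =
      (1 / (n : ℂ)) * ∫ s in (0:ℝ)..(n : ℝ), a * Complex.exp (-Complex.I * μ * s) := by
    intro n hn
    have hn0 : (0:ℝ) ≤ (n:ℝ) := by positivity
    have h1 : ∀ m, F n m = (1 / (n : ℂ)) *
        ∫ s in (0:ℝ)..(n:ℝ), c m * Complex.exp (Complex.I * α m * s) := by
      intro m
      rw [hF_def]
      beta_reduce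
      rw [intervalIntegral.integral_const_mul]
      ring
    have hlint : ∀ m, (∫⁻ s in Set.Ioc (0:ℝ) (n:ℝ),
        ‖c m * Complex.exp (Complex.I * α m * s)‖₊ ∂volume) = ‖c m‖₊ * ENNReal.ofReal n := by
      intro m
      have hpt : ∀ s : ℝ, (‖c m * Complex.exp (Complex.I * α m * s)‖₊ : ℝ≥0∞)
          = (‖c m‖₊ : ℝ≥0∞) := by
        intro s
        congr 1
        apply NNReal.coe_injective
        simp only [coe_nnnorm, norm_mul, norm_exp_I_mul_ofReal, mul_one]
      simp only [hpt]
      rw [setLIntegral_const, Real.volume_Ioc, sub_zero]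
    calc ∑' m, F n m
        = (1 / (n : ℂ)) * ∑' m, ∫ s in (0:ℝ)..(n:ℝ),
            c m * Complex.exp (Complex.I * α m * s) := by
          rw [← tsum_mul_left]; exact tsum_congr h1
      _ = (1 / (n : ℂ)) * ∑' m, ∫ s in Set.Ioc (0:ℝ) (n:ℝ),
            c m * Complex.exp (Complex.I * α m * s) := by
          congr 1; exact tsum_congr fun m => intervalIntegral.integral_of_le hn0
      _ = (1 / (n : ℂ)) * ∫ s in Set.Ioc (0:ℝ) (n:ℝ),
            ∑' m, c m * Complex.exp (Complex.I * α m * s) := by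
          congr 1
          refine (integral_tsum (fun m => Continuous.aestronglyMeasurable
            (continuous_const.mul ((continuous_const.mul Complex.continuous_ofReal).cexp))) ?_).symm
          simp only [Pi.mul_apply, Function.comp_apply, ← enorm_eq_nnnorm] at hlint ⊢
          rw [tsum_congr hlint, ENNReal.tsum_mul_right]
          refine ENNReal.mul_ne_top ?_ ENNReal.ofReal_ne_top
          simp only [enorm_eq_nnnorm]
          rw [ENNReal.tsum_coe_ne_top_iff_summable]
          rw [← NNReal.summable_coe]
          simpa [coe_nnnorm] using hcs
      _ = (1 / (n : ℂ)) * ∫ s in Set.Ioc (0:ℝ) (n:ℝ), a * Complex.exp (-Complex.I * μ * s) := by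
          congr 1
          refine setIntegral_congr_fun measurableSet_Ioc fun s hs => ?_
          have hs0 : (0:ℝ) ≤ s := le_of_lt hs.1
          have hterm : ∀ m, c m * Complex.exp (Complex.I * α m * s)
              = c m * Complex.exp (Complex.I * ω (m + 2) * s)
                * Complex.exp (-Complex.I * μ * s) := by
            intro m
            rw [mul_assoc (c m), ← Complex.exp_add]
            congr 1
            simp only [hα_def]
            push_cast
            ring
          rw [tsum_congr hterm, tsum_mul_right, hceq s hs0, Polynomial.eval_C]
      _ = _ := by rw [intervalIntegral.integral_of_le hn0]
  -- the polynomial-side average tends to 0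
  have hIμ : -Complex.I * (μ : ℂ) ≠ 0 :=
    mul_ne_zero (neg_ne_zero.mpr Complex.I_ne_zero) (Complex.ofReal_ne_zero.mpr hμ0)
  have hG2 : Tendsto (fun n : ℕ => (1 / (n : ℂ)) *
      ∫ s in (0:ℝ)..(n : ℝ), a * Complex.exp (-Complex.I * μ * s)) atTop (𝓝 0) := by
    have hFeq : ∀ n : ℕ, (∫ s in (0:ℝ)..(n : ℝ), a * Complex.exp (-Complex.I * μ * s))
        = a * ((Complex.exp (-Complex.I * μ * ((n:ℝ):ℂ)) - 1) / (-Complex.I * μ)) := by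
      intro n
      rw [intervalIntegral.integral_const_mul, integral_exp_mul_complex hIμ]
      rw [Complex.ofReal_zero, mul_zero, Complex.exp_zero]
    rw [show (fun n : ℕ => (1 / (n : ℂ)) *
        ∫ s in (0:ℝ)..(n : ℝ), a * Complex.exp (-Complex.I * μ * s))
      = fun n : ℕ => (1 / (n : ℂ)) *
        (a * ((Complex.exp (-Complex.I * μ * ((n:ℝ):ℂ)) - 1) / (-Complex.I * μ)))
      from funext fun n => by rw [hFeq n]]
    refine tendsto_div_nat_aux _ (‖a‖ * (2 / |μ|)) fun n => ?_
    rw [norm_mul]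
    refine mul_le_mul_of_nonneg_left ?_ (norm_nonneg _)
    rw [norm_div, norm_mul, norm_neg, Complex.norm_I, one_mul, Complex.norm_real,
      Real.norm_eq_abs]
    have h1 : ‖Complex.exp (-Complex.I * μ * ((n:ℝ):ℂ)) - 1‖ ≤ 2 := by
      calc ‖Complex.exp (-Complex.I * μ * ((n:ℝ):ℂ)) - 1‖
          ≤ ‖Complex.exp (-Complex.I * μ * ((n:ℝ):ℂ))‖ + ‖(1:ℂ)‖ := norm_sub_le _ _
        _ = 2 := by
            rw [show -Complex.I * (μ:ℂ) * ((n:ℝ):ℂ)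
                = Complex.I * ((-μ : ℝ):ℂ) * ((n:ℝ):ℂ) by push_cast; ring,
              norm_exp_I_mul_ofReal, norm_one]
            norm_num
    have h2 : (0:ℝ) < |μ| := abs_pos.mpr hμ0
    gcongr
  -- conclude
  have hG2' : Tendsto (fun n => ∑' m, F n m) atTop (𝓝 0) := by
    refine Tendsto.congr' ?_ hG2
    filter_upwards [eventually_ge_atTop 1] with n hn
    exact (hswap n hn).symm
  have hck : c k = 0 := tendsto_nhds_unique hG1 hG2'
  have hconj : (starRingEnd ℂ) (h (k + 2)) = 0 := by
    simp only [hc_def] at hck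
    rcases div_eq_zero_iff.mp hck with h1 | h1
    · exact h1
    · exact absurd h1 (hden k)
  rw [map_eq_zero] at hconj
  exact hconj
end

section
/- For any T > 0, R > 0 there exists a constant C > 0 such that for all sufficiently small ε > 0, the closed ball of radius R in W^{1,1}([0,T], ℝ), viewed as a subset of L¹([0,T], ℝ), can be covered by at most exp(C ε^{-1} log(1/ε)) sets of diameter at most 2ε in the L¹ norm. -/
/-!
A function `u` in the ball is bounded by `R / T + R` (some point has `|u|` below its mean, and
`u` varies by at most `‖u'‖₁ ≤ R`). Split `[0, T]` into `N ≈ 2RT/ε` equal pieces and quantise the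
values of `u` at the `N` nodes to a grid of step `δ = ε / (2T)`: this sorts the ball into
`O(1/ε) ^ N = exp (O(ε⁻¹ log (1/ε)))` cells. Two functions of one cell differ by at most `2δ` at
each node, and on each piece `u - v` moves away from its nodal value by at most the `L¹` mass of
`u' - v'` there, so `‖u - v‖₁ ≤ (T / N) · 2R + T · 2δ ≤ 2ε`.
-/

open MeasureTheory Set intervalIntegral

lemma MeasureTheory.IntegrableOn.intervalIntegrable_of_mem_Icc {f : ℝ → ℝ} {a b c d : ℝ}
    (hf : IntegrableOn f (Icc a b)) (hc : c ∈ Icc a b) (hd : d ∈ Icc a b) :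
    IntervalIntegrable f volume c d :=
  (hf.mono_set (uIcc_subset_Icc hc hd)).intervalIntegrable

lemma setIntegral_Icc_eq_intervalIntegral {f : ℝ → ℝ} {a b : ℝ} (hab : a ≤ b) :
    ∫ t in Icc a b, f t = ∫ t in a..b, f t := by
  rw [integral_Icc_eq_integral_Ioc, integral_of_le hab]

lemma natCast_mul_div_mem_Icc {T : ℝ} (hT : 0 ≤ T) {N j : ℕ} (hj : j ≤ N) :
    (j : ℝ) * (T / N) ∈ Icc 0 T := by
  refine ⟨by positivity, ?_⟩
  rw [mul_div_left_comm]
  exact mul_le_of_le_one_right hT (div_le_one_of_le₀ (by exact_mod_cast hj) (Nat.cast_nonneg N))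

/-- `u ∈ W^{1,1}(0, T)` with weak derivative `g`, in its absolutely continuous representative. -/
def IsPrimitiveOn (T : ℝ) (u g : ℝ → ℝ) : Prop :=
  IntegrableOn g (Icc 0 T) ∧ ∀ x ∈ Icc 0 T, u x = u 0 + ∫ t in (0 : ℝ)..x, g t

namespace IsPrimitiveOn

variable {T : ℝ} {u v g h : ℝ → ℝ}

lemma sub_eq_integral (hu : IsPrimitiveOn T u g) {a b : ℝ} (ha : a ∈ Icc 0 T)
    (hb : b ∈ Icc 0 T) : u b - u a = ∫ t in a..b, g t := by
  have h0 : (0 : ℝ) ∈ Icc 0 T := ⟨le_rfl, ha.1.trans ha.2⟩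
  rw [hu.2 b hb, hu.2 a ha, ← integral_interval_sub_left
    (hu.1.intervalIntegrable_of_mem_Icc h0 hb) (hu.1.intervalIntegrable_of_mem_Icc h0 ha)]
  ring

lemma sub (hu : IsPrimitiveOn T u g) (hv : IsPrimitiveOn T v h) :
    IsPrimitiveOn T (u - v) (g - h) := by
  refine ⟨hu.1.sub hv.1, fun x hx => ?_⟩
  have h0 : (0 : ℝ) ∈ Icc 0 T := ⟨le_rfl, hx.1.trans hx.2⟩
  change u x - v x = u 0 - v 0 + ∫ t in (0 : ℝ)..x, (g t - h t)
  rw [integral_sub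
    (hu.1.intervalIntegrable_of_mem_Icc h0 hx) (hv.1.intervalIntegrable_of_mem_Icc h0 hx),
    ← hu.sub_eq_integral h0 hx, ← hv.sub_eq_integral h0 hx]
  ring

lemma integrableOn_abs (hu : IsPrimitiveOn T u g) : IntegrableOn (fun s => |g s|) (Icc 0 T) :=
  hu.1.abs

lemma continuousOn (hu : IsPrimitiveOn T u g) : ContinuousOn u (Icc 0 T) :=
  (continuousOn_const.add (continuousOn_primitive hu.1)).congr fun x hx => by
    rw [hu.2 x hx, integral_of_le hx.1]; rfl

lemma abs_le_of_mem_Icc (hu : IsPrimitiveOn T u g) {a b t : ℝ} (ha : a ∈ Icc 0 T)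
    (hb : b ∈ Icc 0 T) (ht : t ∈ Icc a b) : |u t| ≤ |u a| + ∫ s in a..b, |g s| := by
  have htT : t ∈ Icc 0 T := ⟨ha.1.trans ht.1, ht.2.trans hb.2⟩
  calc |u t| ≤ |u a| + |u t - u a| := by
        simpa using abs_add_le (u a) (u t - u a)
    _ ≤ |u a| + ∫ s in a..t, |g s| := by
        rw [hu.sub_eq_integral ha htT]; gcongr; exact abs_integral_le_integral_abs ht.1
    _ ≤ |u a| + ∫ s in a..b, |g s| := by
        gcongr
        exact integral_mono_interval le_rfl ht.1 ht.2 (ae_of_all _ fun _ => abs_nonneg _)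
          (hu.integrableOn_abs.intervalIntegrable_of_mem_Icc ha hb)

lemma integral_abs_le (hu : IsPrimitiveOn T u g) {a b : ℝ} (ha : a ∈ Icc 0 T)
    (hb : b ∈ Icc 0 T) (hab : a ≤ b) :
    ∫ t in a..b, |u t| ≤ (b - a) * (|u a| + ∫ s in a..b, |g s|) := by
  have hint : IntervalIntegrable (fun t => |u t|) volume a b :=
    ((hu.continuousOn.mono (uIcc_subset_Icc ha hb)).abs).intervalIntegrable
  simpa [mul_add] using integral_mono_on hab hint intervalIntegrable_const
    fun t ht => hu.abs_le_of_mem_Icc ha hb ht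

lemma abs_sub_le_integral_Icc (hu : IsPrimitiveOn T u g) {a b : ℝ} (ha : a ∈ Icc 0 T)
    (hb : b ∈ Icc 0 T) : |u b - u a| ≤ ∫ s in Icc 0 T, |g s| := by
  rw [hu.sub_eq_integral ha hb]
  refine (norm_integral_le_integral_norm_uIoc).trans
    (setIntegral_mono_set hu.1.norm (ae_of_all _ fun _ => norm_nonneg _)
      (uIoc_subset_uIcc.trans (uIcc_subset_Icc ha hb)).eventuallyLE)

lemma abs_le (hu : IsPrimitiveOn T u g) (hT : 0 < T) {t : ℝ} (ht : t ∈ Icc 0 T) :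
    |u t| ≤ (∫ s in Icc 0 T, |u s|) / T + ∫ s in Icc 0 T, |g s| := by
  obtain ⟨t₀, ht₀, hmean⟩ := exists_le_setAverage (μ := volume) (f := fun s => |u s|)
    (by simp [hT]) (by simp) (hu.continuousOn.abs.integrableOn_compact isCompact_Icc)
  rw [setAverage_eq, measureReal_def, Real.volume_Icc, sub_zero,
    ENNReal.toReal_ofReal hT.le, smul_eq_mul, inv_mul_eq_div] at hmean
  calc |u t| ≤ |u t₀| + |u t - u t₀| := by simpa using abs_add_le (u t₀) (u t - u t₀)
    _ ≤ _ := add_le_add hmean (hu.abs_sub_le_integral_Icc ht₀ ht)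

lemma integral_abs_le_of_abs_le_on_grid (hu : IsPrimitiveOn T u g) (hT : 0 ≤ T) {N : ℕ}
    (hN : 0 < N) {η : ℝ} (hgrid : ∀ j < N, |u (j * (T / N))| ≤ η) :
    ∫ t in (0 : ℝ)..T, |u t| ≤ T / N * (∫ t in (0 : ℝ)..T, |g t|) + T * η := by
  set a : ℕ → ℝ := fun j => j * (T / N)
  have ha : ∀ j ≤ N, a j ∈ Icc 0 T := fun j hj => natCast_mul_div_mem_Icc hT hj
  have hstep : ∀ j, a (j + 1) - a j = T / N := fun j => by simp only [a]; push_cast; ring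
  have h0 : a 0 = 0 := by simp [a]
  have hN' : a N = T := mul_div_cancel₀ T (by positivity)
  have hsplit : ∀ f : ℝ → ℝ, IntegrableOn f (Icc 0 T) →
      ∑ j ∈ Finset.range N, ∫ t in a j..a (j + 1), f t = ∫ t in (0 : ℝ)..T, f t := fun f hf => by
    rw [sum_integral_adjacent_intervals fun j hj =>
      hf.intervalIntegrable_of_mem_Icc (ha j hj.le) (ha (j + 1) hj), h0, hN']
  rw [← hsplit _ hu.integrableOn_abs, ← hsplit _
    (hu.continuousOn.abs.integrableOn_compact isCompact_Icc), Finset.mul_sum]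
  calc ∑ j ∈ Finset.range N, ∫ t in a j..a (j + 1), |u t|
      ≤ ∑ j ∈ Finset.range N, (T / N * (∫ t in a j..a (j + 1), |g t|) + T / N * η) := by
        refine Finset.sum_le_sum fun j hj => ?_
        have hj := Finset.mem_range.mp hj
        have hpiece := hu.integral_abs_le (ha j hj.le) (ha (j + 1) hj)
          (by linarith [hstep j, div_nonneg hT (Nat.cast_nonneg N)])
        rw [hstep j] at hpiece
        nlinarith [hgrid j hj, div_nonneg hT (Nat.cast_nonneg N)]
    _ = _ := by
        rw [Finset.sum_add_distrib, Finset.sum_const, Finset.card_range, nsmul_eq_mul,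
          ← mul_assoc, mul_div_cancel₀ T (by positivity)]

end IsPrimitiveOn

lemma pow_le_exp_mul_inv_mul_log {a b ε L : ℝ} {N : ℕ} (ha : 0 ≤ a) (hb : 0 ≤ b) (hε : 0 < ε)
    (hε₀ : ε < Real.exp (-1)) (hL₀ : 0 ≤ L) (hL : L ≤ b / ε + 1) (hN : N ≤ a / ε + 1) :
    L ^ N ≤ Real.exp ((a + 1) * (Real.log (b + 1) + 1) * ε⁻¹ * Real.log (1 / ε)) := by
  have hε₁ : ε ≤ 1 := (hε₀.trans (Real.exp_lt_one_iff.2 (by norm_num))).le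
  have hinv : 1 ≤ 1 / ε := one_le_one_div hε hε₁
  have hlogε : 1 ≤ Real.log (1 / ε) := by
    rw [one_div, Real.log_inv, le_neg, ← Real.log_exp (-1)]
    exact Real.log_le_log hε hε₀.le
  have hlogb : 0 ≤ Real.log (b + 1) := Real.log_nonneg (by linarith)
  have hL' : L ≤ (b + 1) / ε := by rw [add_div]; linarith
  have hN' : (N : ℝ) ≤ (a + 1) * ε⁻¹ := by rw [← div_eq_mul_inv, add_div]; linarith
  have hlog : Real.log ((b + 1) / ε) ≤ (Real.log (b + 1) + 1) * Real.log (1 / ε) := by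
    rw [div_eq_mul_one_div (b + 1), Real.log_mul (by positivity) (by positivity)]
    nlinarith
  calc L ^ N ≤ ((b + 1) / ε) ^ N := pow_le_pow_left₀ hL₀ hL' N
    _ = Real.exp (N * Real.log ((b + 1) / ε)) := by
        rw [Real.exp_nat_mul, Real.exp_log (by positivity)]
    _ ≤ Real.exp (((a + 1) * ε⁻¹) * ((Real.log (b + 1) + 1) * Real.log (1 / ε))) :=
        Real.exp_le_exp.2 <| mul_le_mul hN' hlog
          (Real.log_nonneg ((le_div_iff₀ hε).2 (by linarith))) (by positivity)
    _ = Real.exp ((a + 1) * (Real.log (b + 1) + 1) * ε⁻¹ * Real.log (1 / ε)) := by ring_nf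

lemma exists_fin_abs_sub_le {s M δ : ℝ} (hδ : 0 < δ) (hs : |s| ≤ M) :
    ∃ m : Fin (⌊2 * M / δ⌋₊ + 1), |s - (m * δ - M)| ≤ δ := by
  obtain ⟨hs₁, hs₂⟩ := abs_le.1 hs
  have hx : 0 ≤ (s + M) / δ := div_nonneg (by linarith) hδ.le
  refine ⟨⟨⌊(s + M) / δ⌋₊, Nat.lt_succ_of_le (Nat.floor_le_floor (by gcongr; linarith))⟩, ?_⟩
  have h₁ := (le_div_iff₀ hδ).1 (Nat.floor_le hx)
  have h₂ := (div_lt_iff₀ hδ).1 (Nat.lt_floor_add_one ((s + M) / δ))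
  rw [abs_le]
  constructor <;> nlinarith

def gridCell (S : Set (ℝ → ℝ)) (T M δ : ℝ) {N K : ℕ} (c : Fin N → Fin K) : Set (ℝ → ℝ) :=
  {u ∈ S | ∀ j : Fin N, |u ((j : ℕ) * (T / N)) - ((c j : ℕ) * δ - M)| ≤ δ}

section gridCell

variable {S : Set (ℝ → ℝ)} {T M δ : ℝ} {N : ℕ}

lemma subset_iUnion_gridCell (hδ : 0 < δ) (hS : ∀ u ∈ S, ∀ j : Fin N, |u ((j : ℕ) * (T / N))| ≤ M) :
    S ⊆ ⋃ c : Fin N → Fin (⌊2 * M / δ⌋₊ + 1), gridCell S T M δ c := fun u hu => by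
  choose c hc using fun j => exists_fin_abs_sub_le hδ (hS u hu j)
  exact mem_iUnion.2 ⟨c, hu, hc⟩

lemma abs_sub_le_of_mem_gridCell {K : ℕ} {c : Fin N → Fin K} {u v : ℝ → ℝ}
    (hu : u ∈ gridCell S T M δ c) (hv : v ∈ gridCell S T M δ c) (j : Fin N) :
    |u ((j : ℕ) * (T / N)) - v ((j : ℕ) * (T / N))| ≤ 2 * δ := by
  have hu' := abs_le.1 (hu.2 j)
  have hv' := abs_le.1 (hv.2 j)
  rw [abs_le]
  constructor <;> linarith [hu'.1, hu'.2, hv'.1, hv'.2]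

end gridCell

def sobolevBall (T R : ℝ) : Set (ℝ → ℝ) :=
  {u | ∃ g : ℝ → ℝ, IntegrableOn g (Icc 0 T) ∧
    (∀ x ∈ Icc (0 : ℝ) T, u x = u 0 + ∫ t in (0 : ℝ)..x, g t) ∧
    (∫ t in Icc (0 : ℝ) T, |u t|) + (∫ t in Icc (0 : ℝ) T, |g t|) ≤ R}

section sobolevBall

variable {T R : ℝ} {u v : ℝ → ℝ}

lemma abs_le_of_mem_sobolevBall (hT : 0 < T) (hu : u ∈ sobolevBall T R) {t : ℝ}
    (ht : t ∈ Icc 0 T) : |u t| ≤ R / T + R := by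
  obtain ⟨g, hg, hrep, hR⟩ := hu
  have hu₀ : 0 ≤ ∫ s in Icc 0 T, |u s| := integral_nonneg fun _ => abs_nonneg _
  have hg₀ : 0 ≤ ∫ s in Icc 0 T, |g s| := integral_nonneg fun _ => abs_nonneg _
  calc |u t| ≤ (∫ s in Icc 0 T, |u s|) / T + ∫ s in Icc 0 T, |g s| :=
        IsPrimitiveOn.abs_le ⟨hg, hrep⟩ hT ht
    _ ≤ R / T + R := by gcongr <;> linarith

lemma integral_abs_sub_le_of_mem_sobolevBall (hT : 0 ≤ T) (hu : u ∈ sobolevBall T R)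
    (hv : v ∈ sobolevBall T R) {N : ℕ} (hN : 0 < N) {η : ℝ}
    (hgrid : ∀ j < N, |u (j * (T / N)) - v (j * (T / N))| ≤ η) :
    ∫ t in Icc 0 T, |u t - v t| ≤ T / N * (2 * R) + T * η := by
  obtain ⟨g, hg, hrepu, hRu⟩ := hu
  obtain ⟨h, hh, hrepv, hRv⟩ := hv
  have huv : IsPrimitiveOn T (u - v) (g - h) := IsPrimitiveOn.sub ⟨hg, hrepu⟩ ⟨hh, hrepv⟩
  have hu₀ : 0 ≤ ∫ s in Icc 0 T, |u s| := integral_nonneg fun _ => abs_nonneg _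
  have hv₀ : 0 ≤ ∫ s in Icc 0 T, |v s| := integral_nonneg fun _ => abs_nonneg _
  have hgh : ∫ t in Icc 0 T, |g t - h t| ≤ 2 * R := by
    calc ∫ t in Icc 0 T, |g t - h t| ≤ ∫ t in Icc 0 T, (|g t| + |h t|) :=
          integral_mono huv.integrableOn_abs (hg.abs.add hh.abs) fun t => abs_sub _ _
      _ ≤ 2 * R := by rw [integral_add hg.abs hh.abs]; linarith
  rw [setIntegral_Icc_eq_intervalIntegral hT]
  rw [setIntegral_Icc_eq_intervalIntegral hT] at hgh
  calc ∫ t in (0 : ℝ)..T, |u t - v t| ≤ T / N * (∫ t in (0 : ℝ)..T, |g t - h t|) + T * η :=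
        huv.integral_abs_le_of_abs_le_on_grid hT hN hgrid
    _ ≤ T / N * (2 * R) + T * η := by gcongr

lemma exists_cover_sobolevBall (hT : 0 < T) {N : ℕ} (hN : 0 < N) {δ : ℝ} (hδ : 0 < δ) :
    ∃ A : Fin ((⌊2 * (R / T + R) / δ⌋₊ + 1) ^ N) → Set (ℝ → ℝ), sobolevBall T R ⊆ ⋃ i, A i ∧
      ∀ i, ∀ u ∈ A i, ∀ v ∈ A i, ∫ t in Icc 0 T, |u t - v t| ≤ T / N * (2 * R) + T * (2 * δ) := by
  refine ⟨fun i => gridCell (sobolevBall T R) T (R / T + R) δ (finFunctionFinEquiv.symm i), ?_,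
    fun i u hu v hv => ?_⟩
  · rw [finFunctionFinEquiv.symm.surjective.iUnion_comp]
    exact subset_iUnion_gridCell hδ fun u hu j =>
      abs_le_of_mem_sobolevBall hT hu (natCast_mul_div_mem_Icc hT.le j.isLt.le)
  · exact integral_abs_sub_le_of_mem_sobolevBall hT.le hu.1 hv.1 hN fun j hj =>
      abs_sub_le_of_mem_gridCell hu hv ⟨j, hj⟩

end sobolevBall

/-- Kolmogorov entropy bound `C ε⁻¹ log(1/ε)` for a ball of the Sobolev space
`W^{1,1}([0,T],ℝ)` (absolutely continuous functions with integrable derivative,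
`‖u‖_{L¹} + ‖u'‖_{L¹} ≤ R`) viewed as a subset of `L¹([0,T],ℝ)`. -/
theorem entropy_W11_ball (T R : ℝ) (hT : 0 < T) (hR : 0 < R) :
    ∃ C > (0:ℝ), ∃ ε₀ > (0:ℝ), ∀ ε : ℝ, 0 < ε → ε < ε₀ →
      ∃ n : ℕ, (n : ℝ) ≤ Real.exp (C * ε⁻¹ * Real.log (1 / ε)) ∧
        ∃ A : Fin n → Set (ℝ → ℝ),
          {u : ℝ → ℝ | ∃ g : ℝ → ℝ, IntegrableOn g (Set.Icc 0 T) ∧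
              (∀ x ∈ Set.Icc (0:ℝ) T, u x = u 0 + ∫ t in (0:ℝ)..x, g t) ∧
              (∫ t in Set.Icc (0:ℝ) T, |u t|) + (∫ t in Set.Icc (0:ℝ) T, |g t|) ≤ R}
            ⊆ ⋃ i, A i ∧
          ∀ i, ∀ u ∈ A i, ∀ v ∈ A i,
            (∫ t in Set.Icc (0:ℝ) T, |u t - v t|) ≤ 2 * ε := by
  have hC : 0 < (2 * R * T + 1) * (Real.log (4 * (R / T + R) * T + 1) + 1) := by
    have := Real.log_nonneg (le_add_of_nonneg_left (by positivity : 0 ≤ 4 * (R / T + R) * T))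
    positivity
  refine ⟨_, hC, Real.exp (-1), Real.exp_pos _, fun ε hε hε₀ => ?_⟩
  set N := ⌈2 * R * T / ε⌉₊
  set δ := ε / (2 * T)
  have hN : 0 < N := Nat.ceil_pos.2 (by positivity)
  obtain ⟨A, hcover, hdiam⟩ := exists_cover_sobolevBall (R := R) hT hN (by positivity : 0 < δ)
  refine ⟨_, ?_, A, hcover, fun i u hu v hv => (hdiam i u hu v hv).trans ?_⟩
  · have hK : (⌊2 * (R / T + R) / δ⌋₊ : ℝ) ≤ 4 * (R / T + R) * T / ε := by
      calc (⌊2 * (R / T + R) / δ⌋₊ : ℝ) ≤ 2 * (R / T + R) / δ := Nat.floor_le (by positivity)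
        _ = 4 * (R / T + R) * T / ε := by simp only [δ]; field_simp; ring
    push_cast
    exact pow_le_exp_mul_inv_mul_log (by positivity) (by positivity) hε hε₀ (by positivity)
      (by linarith) (Nat.ceil_lt_add_one (by positivity)).le
  · have hNR : T / N * (2 * R) ≤ ε := by
      rw [div_mul_eq_mul_div, div_le_iff₀ (by positivity)]
      linarith [(div_le_iff₀' hε).1 (Nat.le_ceil (2 * R * T / ε))]
    have hδT : T * (2 * δ) = ε := by simp only [δ]; field_simp
    linarith
end

section
/- With Q(x) = x² and e_k(x) = √2 sin(kπx) on (0,1), there exists a constant c > 0 such that for all positive integers p, j: p³ j³ |⟨Q e_p, e_j⟩| ≥ c, i.e., inf_{p,j≥1} p³ j³ |∫₀¹ x² e_p(x) e_j(x) dx| > 0. -/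
open Real

/-! Since `2 sin(pπx) sin(jπx) = cos((p-j)πx) - cos((p+j)πx)` and `∫₀¹ x² cos(ax) dx = 2 cos a / a²`
whenever `sin a = 0`, the matrix element equals `1/3 - 1/(2p²π²)` on the diagonal and
`(-1)^(p+j) 8pj / (π² (p²-j²)²)` off it. As `|p² - j²| ≤ p²j²`, the weight `p³j³` keeps both
above `1/5`. -/

lemma hasDerivAt_sq_mul_cos_antideriv {a : ℝ} (ha : a ≠ 0) (x : ℝ) :
    HasDerivAt (fun x => x ^ 2 * sin (a * x) / a + 2 * x * cos (a * x) / a ^ 2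
      - 2 * sin (a * x) / a ^ 3) (x ^ 2 * cos (a * x)) x := by
  have hlin : HasDerivAt (fun x => a * x) a x := by simpa using (hasDerivAt_id x).const_mul a
  have hsin := (hasDerivAt_sin (a * x)).comp x hlin
  have hcos := (hasDerivAt_cos (a * x)).comp x hlin
  have hsq : HasDerivAt (fun x : ℝ => x ^ 2) (2 * x) x := by simpa using hasDerivAt_pow 2 x
  have htwo : HasDerivAt (fun x : ℝ => 2 * x) 2 x := by simpa using (hasDerivAt_id x).const_mul 2
  refine ((((hsq.mul hsin).div_const a).add ((htwo.mul hcos).div_const (a ^ 2))).sub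
    ((hsin.const_mul 2).div_const (a ^ 3))).congr_deriv ?_
  simp only [Function.comp_apply]
  field_simp
  ring

lemma integral_sq_mul_cos_of_sin_eq_zero {a : ℝ} (ha : a ≠ 0) (hsin : sin a = 0) :
    ∫ x in (0:ℝ)..1, x ^ 2 * cos (a * x) = 2 * cos a / a ^ 2 := by
  rw [intervalIntegral.integral_eq_sub_of_hasDerivAt
    (fun x _ => hasDerivAt_sq_mul_cos_antideriv ha x)
    (by apply Continuous.intervalIntegrable; fun_prop)]
  simp [hsin]

lemma integral_sq_mul_sin_mul_sin (p j : ℝ) :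
    ∫ x in (0:ℝ)..1, x ^ 2 * (√2 * sin (p * π * x)) * (√2 * sin (j * π * x))
      = (∫ x in (0:ℝ)..1, x ^ 2 * cos ((p - j) * π * x))
        - ∫ x in (0:ℝ)..1, x ^ 2 * cos ((p + j) * π * x) := by
  rw [← intervalIntegral.integral_sub (by apply Continuous.intervalIntegrable; fun_prop)
    (by apply Continuous.intervalIntegrable; fun_prop)]
  refine intervalIntegral.integral_congr fun x _ => ?_
  have h := two_mul_sin_mul_sin (p * π * x) (j * π * x)
  have h2 : √2 * √2 = 2 := mul_self_sqrt zero_le_two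
  rw [sub_mul, add_mul, sub_mul, add_mul]
  linear_combination x ^ 2 * sin (p * π * x) * sin (j * π * x) * h2 + x ^ 2 * h

lemma integral_sq_mul_sin_mul_sin_self {p : ℕ} (hp : 0 < p) :
    ∫ x in (0:ℝ)..1, x ^ 2 * (√2 * sin (p * π * x)) * (√2 * sin (p * π * x))
      = 1 / 3 - 1 / (2 * p ^ 2 * π ^ 2) := by
  have hsin : sin ((p + p) * π) = 0 := by exact_mod_cast sin_nat_mul_pi (p + p)
  have hcos : cos ((p + p) * π) = 1 := by
    rw [show ((p : ℝ) + p) * π = p * (2 * π) by ring, cos_nat_mul_two_pi]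
  rw [integral_sq_mul_sin_mul_sin, sub_self, zero_mul]
  simp_rw [zero_mul, cos_zero, mul_one]
  rw [integral_pow, integral_sq_mul_cos_of_sin_eq_zero (by positivity) hsin, hcos]
  field_simp
  ring

lemma natCast_sq_sub_sq_ne_zero {p j : ℕ} (hpj : p ≠ j) : (p : ℝ) ^ 2 - j ^ 2 ≠ 0 := by
  rw [sub_ne_zero]
  exact_mod_cast (Nat.pow_left_injective two_ne_zero).ne hpj

lemma integral_sq_mul_sin_mul_sin_of_ne {p j : ℕ} (hpj : p ≠ j) :
    ∫ x in (0:ℝ)..1, x ^ 2 * (√2 * sin (p * π * x)) * (√2 * sin (j * π * x))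
      = (-1) ^ (p + j) * (8 * p * j / (π ^ 2 * ((p : ℝ) ^ 2 - j ^ 2) ^ 2)) := by
  have hsub : (p : ℝ) - j ≠ 0 := sub_ne_zero.mpr (by exact_mod_cast hpj)
  have hadd : (p : ℝ) + j ≠ 0 := by
    have : 0 < p + j := by omega
    exact_mod_cast this.ne'
  have hsq := natCast_sq_sub_sq_ne_zero hpj
  have hsin_sub : sin ((p - j) * π) = 0 := by
    rw [sub_mul, sin_sub, sin_nat_mul_pi, sin_nat_mul_pi]; ring
  have hsin_add : sin ((p + j) * π) = 0 := by
    rw [add_mul, sin_add, sin_nat_mul_pi, sin_nat_mul_pi]; ring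
  rw [integral_sq_mul_sin_mul_sin, integral_sq_mul_cos_of_sin_eq_zero (by positivity) hsin_sub,
    integral_sq_mul_cos_of_sin_eq_zero (by positivity) hsin_add, sub_mul, add_mul, cos_sub, cos_add]
  simp only [cos_nat_mul_pi, sin_nat_mul_pi]
  field_simp
  ring

lemma sq_sub_sq_sq_le_pow_four_mul_pow_four {p j : ℝ} (hp : 1 ≤ p) (hj : 1 ≤ j) :
    (p ^ 2 - j ^ 2) ^ 2 ≤ p ^ 4 * j ^ 4 := by
  have hp2 : p ^ 2 ≤ p ^ 2 * j ^ 2 := le_mul_of_one_le_right (by positivity) (one_le_pow₀ hj)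
  have hj2 : j ^ 2 ≤ p ^ 2 * j ^ 2 := le_mul_of_one_le_left (by positivity) (one_le_pow₀ hp)
  calc (p ^ 2 - j ^ 2) ^ 2 ≤ (p ^ 2 * j ^ 2) ^ 2 := by
        apply sq_le_sq' <;> nlinarith
    _ = p ^ 4 * j ^ 4 := by ring

/-- With `Q(x) = x²` and `e_k(x) = √2 sin(kπx)` on `(0,1)`, the quantities
`p³ j³ |⟨Q e_p, e_j⟩|` are uniformly bounded below by a positive constant. -/
theorem inf_matrix_elements_pos :
    ∃ c > (0:ℝ), ∀ p j : ℕ, 0 < p → 0 < j →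
      c ≤ (p : ℝ) ^ 3 * (j : ℝ) ^ 3 *
        |∫ x in (0:ℝ)..1,
          x ^ 2 * (Real.sqrt 2 * Real.sin (p * π * x)) * (Real.sqrt 2 * Real.sin (j * π * x))| := by
  refine ⟨1 / 5, by norm_num, fun p j hp hj => ?_⟩
  have hπ_lower : 9 < π ^ 2 := by nlinarith [pi_gt_three]
  have hπ_upper : π ^ 2 < 10 := by nlinarith [pi_lt_d2, pi_pos]
  have hp1 : (1 : ℝ) ≤ p := by exact_mod_cast hp
  have hj1 : (1 : ℝ) ≤ j := by exact_mod_cast hj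
  rcases eq_or_ne p j with rfl | hpj
  · have hdefect : 1 / (2 * (p : ℝ) ^ 2 * π ^ 2) ≤ 1 / 18 :=
      one_div_le_one_div_of_le (by norm_num) (by nlinarith [one_le_pow₀ (n := 2) hp1])
    rw [integral_sq_mul_sin_mul_sin_self hp, abs_of_pos (by linarith)]
    nlinarith [one_le_pow₀ (n := 6) hp1]
  · have hsq := natCast_sq_sub_sq_ne_zero hpj
    rw [integral_sq_mul_sin_mul_sin_of_ne hpj, abs_mul, abs_pow, abs_neg, abs_one, one_pow,
      one_mul, abs_of_nonneg (by positivity)]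
    calc (1 / 5 : ℝ) ≤ 8 / π ^ 2 := by rw [le_div_iff₀ (by positivity)]; linarith
      _ ≤ 8 * (p ^ 4 * j ^ 4) / (π ^ 2 * ((p : ℝ) ^ 2 - j ^ 2) ^ 2) := by
        rw [div_le_div_iff₀ (by positivity) (by positivity)]
        nlinarith [sq_sub_sq_sq_le_pow_four_mul_pow_four hp1 hj1]
      _ = _ := by ring
end

section
/- Let X be a normed space, C ⊆ X convex, u₀ ∈ C, and H : X → ℝ of the form H(u) = ‖F(u) − d‖² for a continuous affine (or bounded linear) map F : X → ℓ² and d ∈ ℓ². If H(u₀) > 0 and the set {F(u) : u ∈ C} is dense in ℓ², then there exists v ∈ C such that d/dt H((1−t)u₀ + t v)|_{t=0} < 0; consequently u₀ is not a minimizer of H on C. -/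
/-!
Along the segment from `u₀` to `v` the derivative of `‖F · - d‖²` at `u₀` is
`2 Re ⟪F u₀ - d, F v - F u₀⟫`, and by Cauchy–Schwarz this is at most
`2 ‖F u₀ - d‖ (‖F v - d‖ - ‖F u₀ - d‖)`. Density of `F '' C` gives `v ∈ C` with `F v` closer
to `d` than `F u₀`, which makes the derivative negative and `v` a better point than `u₀`.
-/

open RCLike
open scoped InnerProductSpace

section

variable {𝕜 E : Type*} [RCLike 𝕜] [NormedAddCommGroup E] [InnerProductSpace 𝕜 E]

theorem re_inner_sub_self_neg_of_norm_lt {x y : E} (h : ‖y‖ < ‖x‖) :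
    re ⟪x, y - x⟫_𝕜 < 0 := by
  have hx : 0 < ‖x‖ := (norm_nonneg y).trans_lt h
  calc re ⟪x, y - x⟫_𝕜 = re ⟪x, y⟫_𝕜 - ‖x‖ ^ 2 := by
        rw [inner_sub_right, map_sub, inner_self_eq_norm_sq]
    _ ≤ ‖x‖ * ‖y‖ - ‖x‖ ^ 2 := by gcongr; exact re_inner_le_norm x y
    _ < 0 := by nlinarith

variable [NormedSpace ℝ E]

theorem HasDerivAt.norm_sq_of_rclike {f : ℝ → E} {f' : E} {t : ℝ} (hf : HasDerivAt f f' t) :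
    HasDerivAt (‖f ·‖ ^ 2) (2 * re ⟪f t, f'⟫_𝕜) t := by
  have hinner := (reCLM (K := 𝕜)).hasFDerivAt.comp_hasDerivAt t (hf.inner 𝕜 hf)
  simp only [Function.comp_def, reCLM_apply, inner_self_eq_norm_sq, map_add] at hinner
  rwa [inner_re_symm f', ← two_mul] at hinner

theorem hasDerivAt_norm_sub_sq_comp_segment {X : Type*} [NormedAddCommGroup X]
    [NormedSpace ℝ X] (F : X →L[ℝ] E) (d : E) (u v : X) :
    HasDerivAt (fun t : ℝ => ‖F ((1 - t) • u + t • v) - d‖ ^ 2)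
      (2 * re ⟪F u - d, F v - F u⟫_𝕜) 0 := by
  have hsegment : HasDerivAt (fun t : ℝ => (1 - t) • u + t • v) (v - u) 0 := by
    convert ((hasDerivAt_id (0 : ℝ)).smul_const (v - u)).const_add u using 1
    · ext t
      simp only [id, sub_smul, one_smul, smul_sub]
      abel
    · rw [one_smul]
  have hcurve : HasDerivAt (fun t : ℝ => F ((1 - t) • u + t • v) - d) (F v - F u) 0 := by
    simpa only [map_sub, Function.comp_def] using
      (F.hasFDerivAt.comp_hasDerivAt 0 hsegment).sub_const d
  simpa using hcurve.norm_sq_of_rclike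

end

theorem descent_direction_exists_general {X : Type*} [NormedAddCommGroup X] [NormedSpace ℝ X]
    (C : Set X) (u₀ : X)
    (F : X →L[ℝ] lp (fun _ : ℕ => ℂ) 2) (d : lp (fun _ : ℕ => ℂ) 2)
    (hpos : 0 < ‖F u₀ - d‖)
    (hdense : Dense (F '' C)) :
    ∃ v ∈ C,
      deriv (fun t : ℝ => ‖F ((1 - t) • u₀ + t • v) - d‖ ^ 2) 0 < 0 ∧
      ∃ w ∈ C, ‖F w - d‖ ^ 2 < ‖F u₀ - d‖ ^ 2 := by
  obtain ⟨_, ⟨v, hvC, rfl⟩, hv⟩ := hdense.exists_dist_lt d hpos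
  have hcloser : ‖F v - d‖ < ‖F u₀ - d‖ := by rwa [dist_comm, dist_eq_norm] at hv
  have hdescent := re_inner_sub_self_neg_of_norm_lt (𝕜 := ℂ) hcloser
  rw [sub_sub_sub_cancel_right] at hdescent
  refine ⟨v, hvC, ?_, v, hvC, by gcongr⟩
  rw [(hasDerivAt_norm_sub_sq_comp_segment (𝕜 := ℂ) F d u₀ v).deriv]
  linarith

/-- If `H(u) = ‖F u - d‖²` with `F` bounded linear into `ℓ²`, `H(u₀) > 0`, and `F(C)` is
dense, then there is a direction `v ∈ C` of strict decrease of `H` along the segment from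
`u₀` to `v`; consequently `u₀` is not a minimizer of `H` on `C`. -/
theorem descent_direction_exists {X : Type*} [NormedAddCommGroup X] [NormedSpace ℝ X]
    (C : Set X) (hC : Convex ℝ C) (u₀ : X) (hu₀ : u₀ ∈ C)
    (F : X →L[ℝ] lp (fun _ : ℕ => ℂ) 2) (d : lp (fun _ : ℕ => ℂ) 2)
    (hpos : 0 < ‖F u₀ - d‖)
    (hdense : Dense (F '' C)) :
    ∃ v ∈ C,
      deriv (fun t : ℝ => ‖F ((1 - t) • u₀ + t • v) - d‖ ^ 2) 0 < 0 ∧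
      ∃ w ∈ C, ‖F w - d‖ ^ 2 < ‖F u₀ - d‖ ^ 2 :=
  descent_direction_exists_general C u₀ F d hpos hdense
end
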